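/- Let μ be a finite (nonnegative) Borel measure on the interval [0, 2π), regarded as the circle, and for n ≥ 1 set c_n = ∫_{[0,2π)} e^{i n θ} dμ(θ). Then for every x ∈ ℝ the series Σ_{n=1}^{∞} Im(e^{i n x} c_n)/n converges (its sequence of partial sums converges) and its sum equals ∫_{[0,2π)} σ(x + θ) dμ(θ), where σ is the 2π-periodic sawtooth function. -/

import Mathlib

open Filter Topology MeasureTheory
open scoped Classical

/-- The `2π`-periodic sawtooth function: `σ(y) = (π − y)/2` for `y ∈ (0, 2π)`, `σ(y) = 0` for
`y ∈ 2πℤ`, extended `2π`-periodically to all of `ℝ`. -/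
noncomputable def sawtooth (y : ℝ) : ℝ :=
  if ∃ k : ℤ, y = 2 * Real.pi * k then 0
  else (Real.pi - 2 * Real.pi * Int.fract (y / (2 * Real.pi))) / 2

namespace Statement12Aux

open Real Finset

noncomputable def S (y : ℝ) (n : ℕ) : ℝ := ∑ i ∈ Finset.range n, Real.sin (((i : ℝ) + 1) * y)

noncomputable def T (y : ℝ) (N : ℕ) : ℝ :=
  ∑ n ∈ Finset.range N, Real.sin (((n : ℝ) + 1) * y) / ((n : ℝ) + 1)

lemma sin_sq_half (y : ℝ) : Real.sin (y / 2) ^ 2 = (1 - Real.cos y) / 2 := by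
  have := Real.sin_sq_eq_half_sub (y / 2)
  rw [show 2 * (y / 2) = y by ring] at this
  linarith

lemma abs_exp_mul_I_sub_one (y : ℝ) :
    ‖Complex.exp (y * Complex.I) - 1‖ = 2 * |Real.sin (y / 2)| := by
  have h : Complex.exp (y * Complex.I) - 1 =
      Complex.mk (Real.cos y - 1) (Real.sin y) := by
    apply Complex.ext <;>
      simp [Complex.exp_ofReal_mul_I_re, Complex.exp_ofReal_mul_I_im]
  rw [h, Complex.norm_def, Complex.normSq_mk]
  have hs : (Real.cos y - 1) * (Real.cos y - 1) + Real.sin y * Real.sin y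
      = (2 * |Real.sin (y / 2)|) ^ 2 := by
    have h1 : Real.sin (y / 2) ^ 2 = (1 - Real.cos y) / 2 := sin_sq_half y
    have h2 : Real.sin y ^ 2 + Real.cos y ^ 2 = 1 := Real.sin_sq_add_cos_sq y
    have h3 : |Real.sin (y / 2)| ^ 2 = Real.sin (y / 2) ^ 2 := sq_abs _
    nlinarith
  rw [hs]
  exact Real.sqrt_sq (by positivity)

lemma norm_geom_sum_le (w : ℂ) (hw : ‖w‖ = 1) (hw1 : w ≠ 1) (n : ℕ) :
    ‖∑ i ∈ Finset.range n, w ^ (i + 1)‖ ≤ 2 / ‖w - 1‖ := by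
  have hne : w - 1 ≠ 0 := sub_ne_zero_of_ne hw1
  have hpos : 0 < ‖w - 1‖ := norm_pos_iff.mpr hne
  have h : ∑ i ∈ Finset.range n, w ^ (i + 1) = w * ((w ^ n - 1) / (w - 1)) := by
    rw [← geom_sum_eq hw1 n, Finset.mul_sum]
    exact Finset.sum_congr rfl fun i _ => by ring
  rw [h]
  have h2 : ‖w ^ n - 1‖ ≤ 2 := by
    calc ‖w ^ n - 1‖ ≤ ‖w ^ n‖ + ‖(1 : ℂ)‖ := norm_sub_le _ _
    _ ≤ 2 := by
        simp only [norm_pow, hw, one_pow, norm_one]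
        norm_num
  calc ‖w * ((w ^ n - 1) / (w - 1))‖ = ‖w ^ n - 1‖ / ‖w - 1‖ := by
        simp [norm_mul, norm_div, hw]
  _ ≤ 2 / ‖w - 1‖ := by
        gcongr

lemma exp_pow_succ (y : ℝ) (i : ℕ) :
    Complex.exp (y * Complex.I) ^ (i + 1) = Complex.exp (((((i : ℝ) + 1) * y : ℝ) : ℂ) * Complex.I) := by
  rw [← Complex.exp_nat_mul]
  push_cast
  ring_nf

lemma S_eq_im (y : ℝ) (n : ℕ) :
    S y n = (∑ i ∈ Finset.range n, Complex.exp (y * Complex.I) ^ (i + 1)).im := by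
  rw [Complex.im_sum]
  exact Finset.sum_congr rfl fun i _ => by
    rw [exp_pow_succ, Complex.exp_ofReal_mul_I_im]

lemma S_abs_le {y : ℝ} (hy : Real.sin (y / 2) ≠ 0) (n : ℕ) :
    |S y n| ≤ 1 / |Real.sin (y / 2)| := by
  have habs : ‖Complex.exp (y * Complex.I)‖ = 1 :=
    Complex.norm_exp_ofReal_mul_I y
  have hw1 : Complex.exp (y * Complex.I) ≠ 1 := by
    intro h
    have := abs_exp_mul_I_sub_one y
    rw [h, sub_self] at this
    simp only [norm_zero] at this
    have : |Real.sin (y / 2)| = 0 := by linarith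
    exact hy (abs_eq_zero.mp this)
  have := norm_geom_sum_le _ habs hw1 n
  rw [abs_exp_mul_I_sub_one y] at this
  rw [S_eq_im]
  calc |(∑ i ∈ Finset.range n, Complex.exp (y * Complex.I) ^ (i + 1)).im|
      ≤ ‖∑ i ∈ Finset.range n, Complex.exp (y * Complex.I) ^ (i + 1)‖ :=
        Complex.abs_im_le_norm _
  _ ≤ 2 / (2 * |Real.sin (y / 2)|) := this
  _ = 1 / |Real.sin (y / 2)| := by
      rw [div_eq_div_iff (by positivity) (by positivity)]
      ring

/-- Abel-summation tail estimate. -/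
lemma abel_tail_bound (y : ℝ) (B : ℝ) (hB : 0 ≤ B) (hS : ∀ n, |S y n| ≤ B)
    {m n : ℕ} (hmn : m < n) :
    |∑ i ∈ Finset.Ico m n, Real.sin (((i : ℝ) + 1) * y) / ((i : ℝ) + 1)| ≤
      3 * B / ((m : ℝ) + 1) := by
  set f : ℕ → ℝ := fun i => ((i : ℝ) + 1)⁻¹ with hf
  set g : ℕ → ℝ := fun i => Real.sin (((i : ℝ) + 1) * y) with hg
  have hfa : ∀ {a b : ℕ}, a ≤ b → f b ≤ f a := by
    intro a b hab
    simp only [hf]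
    apply inv_anti₀ (by positivity)
    have : (a : ℝ) ≤ b := Nat.cast_le.mpr hab
    linarith
  have hfpos : ∀ a, 0 < f a := fun a => by positivity
  have key := Finset.sum_Ico_by_parts f g hmn
  have heq : ∀ i ∈ Finset.Ico m n, f i • g i = Real.sin (((i : ℝ) + 1) * y) / ((i : ℝ) + 1) := by
    intro i _
    simp [hf, hg, smul_eq_mul, div_eq_inv_mul]
  rw [Finset.sum_congr rfl heq] at key
  have hSdef : ∀ k, ∑ i ∈ Finset.range k, g i = S y k := fun k => rfl
  rw [key]
  have htel : ∑ i ∈ Finset.Ico m (n - 1), (f i - f (i + 1)) = f m - f (n - 1) := by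
    have hmn1 : m ≤ n - 1 := Nat.le_sub_one_of_lt hmn
    rw [Finset.sum_Ico_eq_sub _ hmn1]
    rw [Finset.sum_range_sub' f (n-1), Finset.sum_range_sub' f m]
    ring
  have hb1 : |f (n - 1) • S y n| ≤ f m * B := by
    rw [smul_eq_mul, abs_mul, abs_of_pos (hfpos _)]
    have := hS n
    have hfn : f (n - 1) ≤ f m := hfa (Nat.le_sub_one_of_lt hmn)
    calc f (n-1) * |S y n| ≤ f (n-1) * B := by
          exact mul_le_mul_of_nonneg_left (hS n) (hfpos _).le
    _ ≤ f m * B := mul_le_mul_of_nonneg_right hfn hB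
  have hb2 : |f m • S y m| ≤ f m * B := by
    rw [smul_eq_mul, abs_mul, abs_of_pos (hfpos _)]
    exact mul_le_mul_of_nonneg_left (hS m) (hfpos _).le
  have hb3 : |∑ i ∈ Finset.Ico m (n - 1), (f (i + 1) - f i) • S y (i + 1)| ≤ f m * B := by
    calc |∑ i ∈ Finset.Ico m (n - 1), (f (i + 1) - f i) • S y (i + 1)|
        ≤ ∑ i ∈ Finset.Ico m (n - 1), |(f (i + 1) - f i) • S y (i + 1)| :=
          Finset.abs_sum_le_sum_abs _ _
    _ ≤ ∑ i ∈ Finset.Ico m (n - 1), (f i - f (i + 1)) * B := by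
        apply Finset.sum_le_sum
        intro i _
        rw [smul_eq_mul, abs_mul, abs_sub_comm, abs_of_nonneg (sub_nonneg.mpr (hfa (Nat.le_succ i)))]
        exact mul_le_mul_of_nonneg_left (hS _) (sub_nonneg.mpr (hfa (Nat.le_succ i)))
    _ = (f m - f (n - 1)) * B := by rw [← Finset.sum_mul, htel]
    _ ≤ f m * B := by
        apply mul_le_mul_of_nonneg_right _ hB
        have := hfpos (n - 1); linarith
  have hfm : f m = ((m : ℝ) + 1)⁻¹ := rfl
  calc |f (n - 1) • S y n - f m • S y m -
        ∑ i ∈ Finset.Ico m (n - 1), (f (i + 1) - f i) • S y (i + 1)|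
      ≤ |f (n - 1) • S y n| + |f m • S y m| +
        |∑ i ∈ Finset.Ico m (n - 1), (f (i + 1) - f i) • S y (i + 1)| := by
        apply (abs_sub _ _).trans
        gcongr
        exact abs_sub _ _
  _ ≤ f m * B + f m * B + f m * B := by gcongr
  _ = 3 * B / ((m : ℝ) + 1) := by rw [hfm]; ring

lemma T_bound_aux {y : ℝ} (hy0 : 0 < y) (hyπ : y ≤ π) (N : ℕ) :
    |T y N| ≤ π + 3 := by
  have hsin : y / π ≤ Real.sin (y / 2) := by
    have := Real.mul_le_sin (x := y / 2) (by linarith) (by linarith)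
    calc y / π = 2 / π * (y / 2) := by field_simp
    _ ≤ Real.sin (y / 2) := this
  have hyπpos : 0 < y / π := by positivity
  have hsinpos : 0 < Real.sin (y / 2) := lt_of_lt_of_le hyπpos hsin
  have hS : ∀ n, |S y n| ≤ π / y := by
    intro n
    calc |S y n| ≤ 1 / |Real.sin (y / 2)| := S_abs_le hsinpos.ne' n
    _ = 1 / Real.sin (y / 2) := by rw [abs_of_pos hsinpos]
    _ ≤ π / y := by
        rw [div_le_div_iff₀ hsinpos (by positivity)]
        calc 1 * y = y := one_mul y
        _ ≤ π * Real.sin (y / 2) := by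
            rw [← div_le_iff₀' pi_pos]
            exact hsin
  set M : ℕ := ⌊π / y⌋₊ with hM
  have hMle : (M : ℝ) ≤ π / y := Nat.floor_le (by positivity)
  have hMlt : π / y < (M : ℝ) + 1 := Nat.lt_floor_add_one _
  -- small partial sums
  have hsmall : ∀ k, k ≤ M → |T y k| ≤ π := by
    intro k hk
    calc |T y k| ≤ ∑ n ∈ Finset.range k, |Real.sin (((n : ℝ) + 1) * y) / ((n : ℝ) + 1)| :=
          Finset.abs_sum_le_sum_abs _ _
    _ ≤ ∑ n ∈ Finset.range k, y := by
        apply Finset.sum_le_sum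
        intro n _
        rw [abs_div, abs_of_pos (by positivity : (0:ℝ) < (n:ℝ)+1)]
        rw [div_le_iff₀ (by positivity)]
        calc |Real.sin (((n : ℝ) + 1) * y)| ≤ |((n : ℝ) + 1) * y| := Real.abs_sin_le_abs
        _ = ((n : ℝ) + 1) * y := abs_of_pos (by positivity)
        _ = y * ((n : ℝ) + 1) := by ring
    _ = k * y := by rw [Finset.sum_const, Finset.card_range, nsmul_eq_mul]
    _ ≤ π := by
        have : (k : ℝ) ≤ M := Nat.cast_le.mpr hk
        calc (k : ℝ) * y ≤ (π / y) * y := by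
              apply mul_le_mul_of_nonneg_right (this.trans hMle) hy0.le
        _ = π := div_mul_cancel₀ _ hy0.ne'
  by_cases hN : N ≤ M
  · calc |T y N| ≤ π := hsmall N hN
    _ ≤ π + 3 := by linarith
  · push_neg at hN
    have hsplit : T y N = T y M + ∑ i ∈ Finset.Ico M N,
        Real.sin (((i : ℝ) + 1) * y) / ((i : ℝ) + 1) := by
      rw [T, T, Finset.range_eq_Ico, Finset.range_eq_Ico]
      exact (Finset.sum_Ico_consecutive _ (Nat.zero_le M) hN.le).symm
    rw [hsplit]
    have htail := abel_tail_bound y (π / y) (by positivity) hS hN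
    have htail2 : 3 * (π / y) / ((M : ℝ) + 1) ≤ 3 := by
      rw [div_le_iff₀ (by positivity)]
      have : π / y ≤ (M : ℝ) + 1 := hMlt.le
      linarith
    calc |T y M + ∑ i ∈ Finset.Ico M N, Real.sin (((i : ℝ) + 1) * y) / ((i : ℝ) + 1)|
        ≤ |T y M| + |∑ i ∈ Finset.Ico M N, Real.sin (((i : ℝ) + 1) * y) / ((i : ℝ) + 1)| :=
          abs_add_le _ _
    _ ≤ π + 3 := add_le_add (hsmall M le_rfl) (htail.trans htail2)

lemma T_neg (y : ℝ) (N : ℕ) : T (-y) N = -T y N := by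
  rw [T, T, ← Finset.sum_neg_distrib]
  apply Finset.sum_congr rfl
  intro n _
  rw [mul_neg, Real.sin_neg]
  ring

lemma T_sub_two_pi_int (y : ℝ) (k : ℤ) (N : ℕ) : T (y - 2 * π * k) N = T y N := by
  apply Finset.sum_congr rfl
  intro n _
  congr 1
  have : ((n : ℝ) + 1) * (y - 2 * π * k) = ((n : ℝ) + 1) * y + (-(((n : ℕ) + 1 : ℤ) * k) : ℤ) * (2 * π) := by
    push_cast; ring
  rw [this, Real.sin_add_int_mul_two_pi]

lemma T_bound (y : ℝ) (N : ℕ) : |T y N| ≤ π + 3 := by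
  -- reduce to y ∈ [0, 2π)
  have hπ := Real.pi_pos
  set k : ℤ := ⌊y / (2 * π)⌋ with hk
  set y' : ℝ := y - 2 * π * k with hy'
  have hred : T y N = T y' N := (T_sub_two_pi_int y k N).symm
  have h0 : 0 ≤ y' := by
    have h' : (k : ℝ) ≤ y / (2 * π) := Int.floor_le _
    rw [le_div_iff₀ (by positivity)] at h'
    rw [hy']
    linarith
  have h2π : y' < 2 * π := by
    have h' : y / (2 * π) < (k : ℝ) + 1 := Int.lt_floor_add_one _
    rw [div_lt_iff₀ (by positivity)] at h'
    rw [hy']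
    linarith
  rw [hred]
  rcases eq_or_lt_of_le h0 with h | h
  · have : T y' N = 0 := by
      apply Finset.sum_eq_zero
      intro n _
      rw [← h, mul_zero, Real.sin_zero, zero_div]
    rw [this, abs_zero]; positivity
  · by_cases hle : y' ≤ π
    · exact T_bound_aux h hle N
    · push_neg at hle
      have h2 : T (2 * π - y') N = -T y' N := by
        have heq : (2 * π - y') = -(y' - 2 * π * ((1:ℤ) : ℝ)) := by push_cast; ring
        rw [heq, T_neg, T_sub_two_pi_int]
      have : T y' N = -T (2 * π - y') N := by rw [h2]; ring
      rw [this, abs_neg]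
      exact T_bound_aux (by linarith) (by linarith) N

lemma arg_one_sub_exp {y : ℝ} (h0 : 0 < y) (h2 : y < 2 * π) :
    Complex.arg (1 - Complex.exp (y * Complex.I)) = y / 2 - π / 2 := by
  have hs : 0 < Real.sin (y / 2) :=
    Real.sin_pos_of_pos_of_lt_pi (by linarith) (by linarith)
  have key : 1 - Complex.exp (y * Complex.I) =
      ((2 * Real.sin (y / 2) : ℝ) : ℂ) *
        (Complex.cos ((y / 2 - π / 2 : ℝ) : ℂ) + Complex.sin ((y / 2 - π / 2 : ℝ) : ℂ) * Complex.I) := by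
    rw [← Complex.ofReal_cos, ← Complex.ofReal_sin]
    apply Complex.ext
    · simp only [Complex.sub_re, Complex.one_re, Complex.exp_ofReal_mul_I_re,
        Complex.mul_re, Complex.ofReal_re, Complex.ofReal_im, Complex.add_re,
        Complex.mul_im, Complex.add_im, Complex.I_re, Complex.I_im]
      rw [Real.cos_sub_pi_div_two, Real.sin_sub_pi_div_two]
      have h' := sin_sq_half y
      ring_nf at h' ⊢
      linarith
    · simp only [Complex.sub_im, Complex.one_im, Complex.exp_ofReal_mul_I_im,
        Complex.mul_im, Complex.ofReal_re, Complex.ofReal_im, Complex.add_re,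
        Complex.add_im, Complex.mul_re, Complex.I_re, Complex.I_im]
      rw [Real.cos_sub_pi_div_two, Real.sin_sub_pi_div_two]
      have hsin2 : Real.sin y = 2 * Real.sin (y / 2) * Real.cos (y / 2) := by
        have := Real.sin_two_mul (y / 2)
        rw [show 2 * (y / 2) = y by ring] at this
        linarith
      ring_nf at hsin2 ⊢
      linarith
  rw [key]
  exact Complex.arg_mul_cos_add_sin_mul_I (by positivity)
    ⟨by linarith [Real.pi_pos], by linarith [Real.pi_pos]⟩

lemma tendsto_T_Ioo {y : ℝ} (h0 : 0 < y) (h2 : y < 2 * π) :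
    Tendsto (T y) atTop (𝓝 ((π - y) / 2)) := by
  set w : ℂ := Complex.exp (y * Complex.I) with hw
  have hwabs : ‖w‖ = 1 := Complex.norm_exp_ofReal_mul_I y
  have hs : 0 < Real.sin (y / 2) :=
    Real.sin_pos_of_pos_of_lt_pi (by linarith) (by linarith)
  have hw1 : w ≠ 1 := by
    intro h
    have h' := abs_exp_mul_I_sub_one y
    rw [← hw, h, sub_self, norm_zero] at h'
    rw [abs_of_pos hs] at h'
    linarith
  -- Dirichlet's test: partial sums converge
  have hb : ∀ n, ‖∑ i ∈ Finset.range n, w ^ (i + 1)‖ ≤ 2 / ‖w - 1‖ :=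
    norm_geom_sum_le w hwabs hw1
  have hfa : Antitone (fun n : ℕ => ((n : ℝ) + 1)⁻¹) := by
    intro a b hab
    apply inv_anti₀ (by positivity)
    have : (a : ℝ) ≤ b := Nat.cast_le.mpr hab
    linarith
  have hf0 : Tendsto (fun n : ℕ => ((n : ℝ) + 1)⁻¹) atTop (𝓝 0) := by
    have := tendsto_one_div_add_atTop_nhds_zero_nat (𝕜 := ℝ)
    simpa [one_div] using this
  have hcauchy : CauchySeq (fun n => ∑ i ∈ Finset.range n,
      ((i : ℝ) + 1)⁻¹ • w ^ (i + 1)) :=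
    hfa.cauchySeq_series_mul_of_tendsto_zero_of_bounded hf0 hb
  obtain ⟨L, hL⟩ := cauchySeq_tendsto_of_complete hcauchy
  -- relate to power series coefficients
  set a : ℕ → ℂ := fun n => w ^ n / n with ha
  have hshift : ∀ n, ∑ i ∈ Finset.range (n + 1), a i =
      ∑ i ∈ Finset.range n, ((i : ℝ) + 1)⁻¹ • w ^ (i + 1) := by
    intro n
    rw [Finset.sum_range_succ']
    have h00 : a 0 = 0 := by simp [ha]
    rw [h00, add_zero]
    apply Finset.sum_congr rfl
    intro i _
    simp only [ha]
    rw [Complex.real_smul]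
    push_cast
    rw [div_eq_inv_mul]
  have haL : Tendsto (fun n => ∑ i ∈ Finset.range n, a i) atTop (𝓝 L) := by
    rw [← tendsto_add_atTop_iff_nat 1]
    exact Tendsto.congr (fun n => (hshift n).symm) hL
  have habel := Complex.tendsto_tsum_powerSeries_nhdsWithin_lt haL
  rw [Filter.tendsto_map'_iff] at habel
  -- the limit is -log(1-w)
  have hre : 0 < (1 - w).re := by
    have : w.re = Real.cos y := Complex.exp_ofReal_mul_I_re y
    simp only [Complex.sub_re, Complex.one_re, this]
    have hcos : Real.cos y < 1 := by
      apply lt_of_le_of_ne (Real.cos_le_one y)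
      intro h
      rw [Real.cos_eq_one_iff] at h
      obtain ⟨n, hn⟩ := h
      have hπ := Real.pi_pos
      have hn0 : (0:ℝ) < (n : ℝ) := by nlinarith
      have hn1 : (1:ℤ) ≤ n := by exact_mod_cast Int.cast_pos.mp hn0
      have : (1:ℝ) ≤ (n : ℝ) := by exact_mod_cast hn1
      nlinarith
    linarith
  have hcont : Tendsto (fun x : ℝ => -Complex.log (1 - w * (x : ℂ))) (𝓝[<] (1:ℝ))
      (𝓝 (-Complex.log (1 - w))) := by
    have h1 : ContinuousAt Complex.log (1 - w) :=
      continuousAt_clog (Complex.mem_slitPlane_iff.mpr (Or.inl hre))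
    have h2 : Tendsto (fun x : ℝ => 1 - w * (x : ℂ)) (𝓝[<] (1:ℝ)) (𝓝 (1 - w)) := by
      have hct : Continuous (fun x : ℝ => 1 - w * (x : ℂ)) :=
        continuous_const.sub (continuous_const.mul Complex.continuous_ofReal)
      have := (hct.continuousAt (x := (1:ℝ))).continuousWithinAt (s := Set.Iio (1:ℝ))
      simpa [mul_one] using this.tendsto
    exact (h1.tendsto.comp h2).neg
  have heq : ∀ᶠ x : ℝ in 𝓝[<] (1:ℝ), ∑' n, a n * (x : ℂ) ^ n = -Complex.log (1 - w * (x : ℂ)) := by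
    filter_upwards [Ioo_mem_nhdsLT_of_mem (by norm_num : (1:ℝ) ∈ Set.Ioc (0:ℝ) 1)] with x hx
    have hxnorm : ‖w * (x : ℂ)‖ < 1 := by
      rw [norm_mul, hwabs, one_mul,
        Complex.norm_real, Real.norm_eq_abs, abs_of_pos hx.1]
      exact hx.2
    have := (Complex.hasSum_taylorSeries_neg_log hxnorm).tsum_eq
    rw [← this]
    apply tsum_congr
    intro n
    simp only [ha]
    rw [mul_pow, div_mul_eq_mul_div]
  have habel' : Tendsto (fun x : ℝ => -Complex.log (1 - w * (x : ℂ))) (𝓝[<] (1:ℝ)) (𝓝 L) :=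
    habel.congr' heq
  have hLval : L = -Complex.log (1 - w) :=
    tendsto_nhds_unique habel' hcont
  -- imaginary parts
  have hTim : ∀ N, T y N = (∑ i ∈ Finset.range N, ((i : ℝ) + 1)⁻¹ • w ^ (i + 1)).im := by
    intro N
    rw [Complex.im_sum]
    apply Finset.sum_congr rfl
    intro i _
    rw [Complex.smul_im, hw, exp_pow_succ, Complex.exp_ofReal_mul_I_im,
      smul_eq_mul, div_eq_inv_mul]
  have hlim : Tendsto (T y) atTop (𝓝 L.im) := by
    have := (Complex.continuous_im.tendsto L).comp hL
    exact Tendsto.congr (fun N => (hTim N).symm) this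
  have hIm : L.im = (π - y) / 2 := by
    rw [hLval, Complex.neg_im, Complex.log_im, arg_one_sub_exp h0 h2]
    ring
  rwa [hIm] at hlim

lemma sawtooth_sub_two_pi_int (y : ℝ) (k : ℤ) : sawtooth (y - 2 * π * k) = sawtooth y := by
  have hπ := Real.pi_pos
  have hcond : (∃ m : ℤ, y - 2 * π * k = 2 * π * m) ↔ (∃ m : ℤ, y = 2 * π * m) := by
    constructor
    · rintro ⟨m, hm⟩
      exact ⟨m + k, by push_cast; linarith⟩
    · rintro ⟨m, hm⟩
      exact ⟨m - k, by push_cast; linarith⟩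
  have hfract : Int.fract ((y - 2 * π * k) / (2 * π)) = Int.fract (y / (2 * π)) := by
    have : (y - 2 * π * k) / (2 * π) = y / (2 * π) - k := by field_simp
    rw [this, Int.fract_sub_intCast]
  rw [sawtooth, sawtooth, hfract]
  by_cases h : ∃ m : ℤ, y = 2 * π * m
  · rw [if_pos (hcond.mpr h), if_pos h]
  · rw [if_neg (fun hh => h (hcond.mp hh)), if_neg h]

lemma tendsto_T (y : ℝ) : Tendsto (T y) atTop (𝓝 (sawtooth y)) := by
  have hπ := Real.pi_pos
  set k : ℤ := ⌊y / (2 * π)⌋ with hk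
  set y' : ℝ := y - 2 * π * k with hy'
  have h0 : 0 ≤ y' := by
    have h' : (k : ℝ) ≤ y / (2 * π) := Int.floor_le _
    rw [le_div_iff₀ (by positivity)] at h'
    rw [hy']; linarith
  have h2π : y' < 2 * π := by
    have h' : y / (2 * π) < (k : ℝ) + 1 := Int.lt_floor_add_one _
    rw [div_lt_iff₀ (by positivity)] at h'
    rw [hy']; linarith
  rw [← sawtooth_sub_two_pi_int y k,
    show T y = T y' from funext fun N => (hy' ▸ (T_sub_two_pi_int y k N).symm), ← hy']
  rcases eq_or_lt_of_le h0 with h | h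
  · have hT : ∀ N, T y' N = 0 := by
      intro N
      apply Finset.sum_eq_zero
      intro n _
      rw [← h, mul_zero, Real.sin_zero, zero_div]
    have hsaw : sawtooth y' = 0 := by
      rw [sawtooth, if_pos ⟨0, by rw [← h]; simp⟩]
    rw [hsaw]
    exact Tendsto.congr (fun N => (hT N).symm) tendsto_const_nhds
  · have hsaw : sawtooth y' = (π - y') / 2 := by
      rw [sawtooth, if_neg, Int.fract_eq_self.mpr ⟨by positivity, by
        rw [div_lt_one (by positivity)]; linarith⟩]
      · field_simp
      · rintro ⟨m, hm⟩
        have hm0 : (0:ℝ) < (m:ℝ) := by nlinarith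
        have hm1 : (1:ℤ) ≤ m := by exact_mod_cast Int.cast_pos.mp hm0
        have : (1:ℝ) ≤ (m:ℝ) := by exact_mod_cast hm1
        nlinarith
    rw [hsaw]
    exact tendsto_T_Ioo h h2π

end Statement12Aux

open Statement12Aux

/-- Let `μ` be a finite Borel measure on `[0, 2π)` (regarded as the circle),
and for `n ≥ 1` set `c_n = ∫ e^{inθ} dμ(θ)`. Then for every `x ∈ ℝ` the series
`Σ_{n=1}^∞ Im(e^{inx} c_n)/n` converges (its sequence of partial sums converges) and its sum
equals `∫ σ(x + θ) dμ(θ)`, where `σ` is the `2π`-periodic sawtooth function. -/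
theorem statement12 (μ : Measure ℝ) [IsFiniteMeasure μ]
    (hsupp : μ (Set.Ico 0 (2 * Real.pi))ᶜ = 0)
    (c : ℕ → ℂ)
    (hc : ∀ n : ℕ, 1 ≤ n → c n = ∫ θ : ℝ, Complex.exp (Complex.I * (n : ℂ) * (θ : ℂ)) ∂μ) :
    ∀ x : ℝ,
      Tendsto (fun N : ℕ => ∑ n ∈ Finset.range N,
          (Complex.exp (Complex.I * ((n : ℂ) + 1) * (x : ℂ)) * c (n + 1)).im / ((n : ℝ) + 1))
        atTop (𝓝 (∫ θ : ℝ, sawtooth (x + θ) ∂μ)) := by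
  intro x
  -- integrability of bounded continuous functions
  have hibc : ∀ (f : ℝ → ℝ), Continuous f → ∀ C : ℝ, (∀ θ, |f θ| ≤ C) → Integrable f μ := by
    intro f hf C hC
    apply (integrable_const C).mono' hf.aestronglyMeasurable
    filter_upwards with θ
    simpa [Real.norm_eq_abs] using hC θ
  have hibcC : ∀ (f : ℝ → ℂ), Continuous f → ∀ C : ℝ, (∀ θ, ‖f θ‖ ≤ C) → Integrable f μ := by
    intro f hf C hC
    apply (integrable_const C).mono' hf.aestronglyMeasurable
    filter_upwards with θ
    exact hC θ
  -- each term is an integral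
  have hterm : ∀ n : ℕ,
      (Complex.exp (Complex.I * ((n : ℂ) + 1) * (x : ℂ)) * c (n + 1)).im / ((n : ℝ) + 1) =
      ∫ θ : ℝ, Real.sin (((n : ℝ) + 1) * (x + θ)) / ((n : ℝ) + 1) ∂μ := by
    intro n
    have hcn := hc (n + 1) (by omega)
    have hInt : Integrable (fun θ : ℝ =>
        Complex.exp (Complex.I * ((n : ℂ) + 1) * ((x : ℂ) + (θ : ℂ)))) μ := by
      apply hibcC _ ?_ 1 ?_
      · exact Complex.continuous_exp.comp
          (continuous_const.mul (continuous_const.add Complex.continuous_ofReal))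
      · intro θ
        have : Complex.I * ((n : ℂ) + 1) * ((x : ℂ) + (θ : ℂ)) =
            ((((n : ℝ) + 1) * (x + θ) : ℝ) : ℂ) * Complex.I := by push_cast; ring
        rw [this, Complex.norm_exp_ofReal_mul_I]
    have hprod : Complex.exp (Complex.I * ((n : ℂ) + 1) * (x : ℂ)) * c (n + 1) =
        ∫ θ : ℝ, Complex.exp (Complex.I * ((n : ℂ) + 1) * ((x : ℂ) + (θ : ℂ))) ∂μ := by
      rw [hcn, ← integral_const_mul]
      apply integral_congr_ae
      filter_upwards with θ
      rw [← Complex.exp_add]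
      push_cast
      ring_nf
    rw [hprod]
    have him := integral_im (𝕜 := ℂ) (μ := μ) hInt
    simp only [RCLike.im_to_complex] at him
    rw [← him, ← integral_div]
    apply integral_congr_ae
    filter_upwards with θ
    have harg : Complex.I * ((n : ℂ) + 1) * ((x : ℂ) + (θ : ℂ)) =
        ((((n : ℝ) + 1) * (x + θ) : ℝ) : ℂ) * Complex.I := by push_cast; ring
    rw [harg, Complex.exp_ofReal_mul_I_im]
  -- partial sums as integrals
  have hsin_int : ∀ n : ℕ, Integrable
      (fun θ : ℝ => Real.sin (((n : ℝ) + 1) * (x + θ)) / ((n : ℝ) + 1)) μ := by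
    intro n
    apply hibc _ ?_ 1 ?_
    · exact (Real.continuous_sin.comp
        (continuous_const.mul (continuous_const.add continuous_id))).div_const _
    · intro θ
      rw [abs_div, abs_of_pos (by positivity : (0:ℝ) < (n:ℝ)+1), div_le_one (by positivity)]
      calc |Real.sin (((n : ℝ) + 1) * (x + θ))| ≤ 1 := Real.abs_sin_le_one _
      _ ≤ (n : ℝ) + 1 := by norm_num
  have hsum : ∀ N : ℕ, (∑ n ∈ Finset.range N,
      (Complex.exp (Complex.I * ((n : ℂ) + 1) * (x : ℂ)) * c (n + 1)).im / ((n : ℝ) + 1)) =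
      ∫ θ : ℝ, T (x + θ) N ∂μ := by
    intro N
    rw [show (fun θ : ℝ => T (x + θ) N) = fun θ : ℝ => ∑ n ∈ Finset.range N,
        Real.sin (((n : ℝ) + 1) * (x + θ)) / ((n : ℝ) + 1) from rfl]
    rw [integral_finset_sum _ (fun n _ => hsin_int n)]
    exact Finset.sum_congr rfl fun n _ => hterm n
  -- dominated convergence
  have hdct : Tendsto (fun N : ℕ => ∫ θ : ℝ, T (x + θ) N ∂μ) atTop
      (𝓝 (∫ θ : ℝ, sawtooth (x + θ) ∂μ)) := by
    apply tendsto_integral_of_dominated_convergence (fun _ => Real.pi + 3)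
    · intro N
      apply Continuous.aestronglyMeasurable
      apply continuous_finset_sum
      intro n _
      exact ((Real.continuous_sin.comp
        (continuous_const.mul (continuous_const.add continuous_id))).div_const _)
    · exact integrable_const _
    · intro N
      filter_upwards with θ
      simpa [Real.norm_eq_abs] using T_bound (x + θ) N
    · filter_upwards with θ
      exact tendsto_T (x + θ)
  exact Tendsto.congr (fun N => (hsum N).symm) hdct
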